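/- arXiv:2107.05974 — 2 statements merged into one kernel-verified Lean document; each statement's English description precedes it below -/
import Mathlib

section
/- There is an isomorphism of graded abelian groups h: ⊕_{J ⊆ [m]} C_*(K_J) → C_*(Z_K), sending a simplex σ ∈ K_J to the cell κ(J\σ, σ), where a simplex σ ∈ K_J is assigned degree |J| + |σ| (using the convention that the (-1)-chain group is generated by the empty simplex). In particular, the number of cells of Z_K of dimension d equals the number of pairs (J, σ) with σ ∈ K_J ⊆ [m], σ ⊆ J, and |J| + |σ| = d. -/
namespace MAC

/-- An abstract simplicial complex on a vertex type `V` (possibly with ghost vertices):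
a set of finite subsets of `V` containing `∅` and closed under taking subsets. -/
structure SComplex (V : Type*) where
  faces : Set (Finset V)
  empty_mem : ∅ ∈ faces
  down_closed : ∀ {σ τ : Finset V}, σ ∈ faces → τ ⊆ σ → τ ∈ faces

/-- The full subcomplex of `K` on the vertex subset `J`. -/
def fullSub {V : Type*} (K : SComplex V) (J : Finset V) : SComplex V where
  faces := {σ | σ ∈ K.faces ∧ σ ⊆ J}
  empty_mem := ⟨K.empty_mem, Finset.empty_subset J⟩
  down_closed := fun hσ hτσ => ⟨K.down_closed hσ.1 hτσ, hτσ.trans hσ.2⟩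

variable {V : Type*} [Fintype V] [DecidableEq V]

/-- A fixed enumeration key on the vertices, used for the signs in the boundary map. -/
noncomputable def vkey (v : V) : ℕ := (Fintype.equivFin V v : ℕ)

/-- Faces of `K` of cardinality `n + 1` (so `n = -1` corresponds to the empty simplex). -/
abbrev sface (K : SComplex V) (n : ℤ) := {σ : Finset V // σ ∈ K.faces ∧ (σ.card : ℤ) = n + 1}

/-- Augmented simplicial `n`-chains of `K` with integer coefficients. -/
abbrev schain (K : SComplex V) (n : ℤ) := sface K n →₀ ℤ

/-- The augmented simplicial boundary map. -/
noncomputable def sboundary (K : SComplex V) (n : ℤ) : schain K n →ₗ[ℤ] schain K (n - 1) :=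
  Finsupp.lsum ℤ fun σ => LinearMap.id.smulRight <|
    ∑ x ∈ σ.1.attach,
      ((-1 : ℤ) ^ (σ.1.filter (fun y => vkey y < vkey x.1)).card) •
        Finsupp.single (⟨σ.1.erase x.1, by
          refine ⟨K.down_closed σ.2.1 (Finset.erase_subset _ _), ?_⟩
          have hc : 0 < σ.1.card := Finset.card_pos.mpr ⟨x.1, x.2⟩
          have h2 := σ.2.2
          rw [Finset.card_erase_of_mem x.2]
          omega⟩ : sface K (n - 1)) 1

/-- Degree cast for chains. -/
noncomputable def scast (K : SComplex V) {a b : ℤ} (h : a = b) : schain K a ≃ₗ[ℤ] schain K b := by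
  subst h; exact LinearEquiv.refl ℤ _

/-- The simplicial coboundary map (the transpose of the boundary map, identifying
cochains with chains via the finite basis of faces). -/
noncomputable def scoboundary (K : SComplex V) (n : ℤ) : schain K n →ₗ[ℤ] schain K (n + 1) :=
  haveI : Fintype (sface K (n + 1)) := Fintype.ofFinite _
  Finsupp.lsum ℤ fun σ => LinearMap.id.smulRight <|
    ∑ τ : sface K (n + 1),
      ((((scast K (show n + 1 - 1 = n by ring)).toLinearMap ∘ₗ sboundary K (n + 1))
        (Finsupp.single τ 1)) σ) • Finsupp.single τ 1

/-- Reduced simplicial homology `H̃_l(K; ℤ)` (with `H̃_{-1}` of the empty complex `ℤ`). -/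
noncomputable abbrev Hred (K : SComplex V) (l : ℤ) :=
  LinearMap.ker (sboundary K l) ⧸
    Submodule.comap (LinearMap.ker (sboundary K l)).subtype
      (LinearMap.range ((scast K (show l + 1 - 1 = l by ring)).toLinearMap ∘ₗ sboundary K (l + 1)))

/-- Reduced simplicial cohomology `H̃^l(K; ℤ)`. -/
noncomputable abbrev Hcored (K : SComplex V) (l : ℤ) :=
  LinearMap.ker (scoboundary K l) ⧸
    Submodule.comap (LinearMap.ker (scoboundary K l)).subtype
      (LinearMap.range ((scast K (show l - 1 + 1 = l by ring)).toLinearMap ∘ₗ scoboundary K (l - 1)))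

/-- The moment-angle complex `Z_K = (D², S¹)^K` as a subset of `ℂ^V`. -/
def ZKset {V : Type*} [Fintype V] (K : SComplex V) : Set (V → ℂ) :=
  ⋃ σ ∈ K.faces, {z | (∀ i, ‖z i‖ ≤ 1) ∧ ∀ i, i ∉ σ → ‖z i‖ = 1}

end MAC

namespace MAC

/-- The isomorphism of graded abelian groups `h : ⊕_{J ⊆ [m]} C_*(K_J) → C_*(Z_K)`,
`σ ↦ κ(J \ σ, σ)`, at the level of the generating bases: the map
`(J, σ) ↦ (J \ σ, σ)` is a degree-preserving bijection from the set of pairs `(J, σ)`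
with `σ ∈ K_J` (σ of degree `|J| + |σ|`, including `σ = ∅`) to the set of cells
`κ(L, I)` of `Z_K` (of dimension `|L| + 2|I|`); in particular, the number of cells of
`Z_K` of dimension `d` is the number of pairs `(J, σ)` with `σ ∈ K_J` and `|J| + |σ| = d`. -/
theorem hochster_chain_iso (m : ℕ) (K : SComplex (Fin m)) :
    ∃ φ : {p : Finset (Fin m) × Finset (Fin m) // p.2 ∈ K.faces ∧ p.2 ⊆ p.1} →
        {c : Finset (Fin m) × Finset (Fin m) // Disjoint c.1 c.2 ∧ c.2 ∈ K.faces},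
      Function.Bijective φ ∧
      (∀ p, (φ p).1 = (p.1.1 \ p.1.2, p.1.2)) ∧
      (∀ p, (φ p).1.1.card + 2 * (φ p).1.2.card = p.1.1.card + p.1.2.card) ∧
      ∀ d : ℕ,
        Nat.card {p : Finset (Fin m) × Finset (Fin m) //
            (p.2 ∈ K.faces ∧ p.2 ⊆ p.1) ∧ p.1.card + p.2.card = d} =
        Nat.card {c : Finset (Fin m) × Finset (Fin m) //
            (Disjoint c.1 c.2 ∧ c.2 ∈ K.faces) ∧ c.1.card + 2 * c.2.card = d} := by
  classical
  refine ⟨fun p => ⟨(p.1.1 \ p.1.2, p.1.2), Finset.sdiff_disjoint, p.2.1⟩, ?_, fun p => rfl,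
    fun p => ?_, fun d => ?_⟩
  · constructor
    · rintro ⟨⟨J1, s1⟩, h1⟩ ⟨⟨J2, s2⟩, h2⟩ h
      simp only [Subtype.mk.injEq, Prod.mk.injEq] at h ⊢
      obtain ⟨hd, hs⟩ := h
      subst hs
      refine ⟨?_, rfl⟩
      have : J1 \ s1 ∪ s1 = J2 \ s1 ∪ s1 := by rw [hd]
      rwa [Finset.sdiff_union_of_subset h1.2, Finset.sdiff_union_of_subset h2.2] at this
    · rintro ⟨⟨L, I⟩, hdis, hI⟩
      refine ⟨⟨(L ∪ I, I), hI, Finset.subset_union_right⟩, ?_⟩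
      simp only [Subtype.mk.injEq, Prod.mk.injEq]
      exact ⟨Finset.union_sdiff_cancel_right hdis, trivial⟩
  · simp only
    rw [Finset.card_sdiff_of_subset p.2.2]
    have := Finset.card_le_card p.2.2
    omega
  · apply Nat.card_eq_of_bijective
      (fun p => ⟨(p.1.1 \ p.1.2, p.1.2), ⟨Finset.sdiff_disjoint, p.2.1.1⟩, by
        have h := p.2.2
        have hc := Finset.card_le_card p.2.1.2
        dsimp only; rw [Finset.card_sdiff_of_subset p.2.1.2]; omega⟩)
    constructor
    · rintro ⟨⟨J1, s1⟩, h1⟩ ⟨⟨J2, s2⟩, h2⟩ h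
      simp only [Subtype.mk.injEq, Prod.mk.injEq] at h ⊢
      obtain ⟨hd, hs⟩ := h
      subst hs
      refine ⟨?_, rfl⟩
      have : J1 \ s1 ∪ s1 = J2 \ s1 ∪ s1 := by rw [hd]
      rwa [Finset.sdiff_union_of_subset h1.1.2, Finset.sdiff_union_of_subset h2.1.2] at this
    · rintro ⟨⟨L, I⟩, ⟨hdis, hI⟩, hcard⟩
      refine ⟨⟨(L ∪ I, I), ⟨hI, Finset.subset_union_right⟩, by
        show (L ∪ I).card + I.card = d; have hdis2 : Disjoint L I := hdis; rw [Finset.card_union_of_disjoint hdis2]; have hc : L.card + 2 * I.card = d := hcard; omega⟩, ?_⟩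
      simp only [Subtype.mk.injEq, Prod.mk.injEq]
      exact ⟨Finset.union_sdiff_cancel_right hdis, trivial⟩


end MAC
end

section
/- For CW pairs (X_{i,j}, A_{i,j}) grouped into tuples (𝐗_i, 𝐀_i) of lengths l_i, the polyhedral product over the polyhedral join satisfies (𝐗,𝐀)^{(K_i,L_i)^{*K}} = ((𝐗_i,𝐀_i)^{K_i}, (𝐗_i,𝐀_i)^{L_i})^{K} as subspaces of the product ∏_{i,j} X_{i,j}. -/
namespace MAC

variable {m : ℕ} {l : Fin m → ℕ}

/-- The part of a subset `τ` of the disjoint union `⊔ᵢ [lᵢ]` lying in the `i`-th block. -/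
noncomputable def slice (τ : Finset (Σ i : Fin m, Fin (l i))) (i : Fin m) :
    Finset (Fin (l i)) :=
  τ.preimage (@Sigma.mk (Fin m) (fun i => Fin (l i)) i)
    (Set.injOn_of_injective sigma_mk_injective)

/-- The faces of the polyhedral join product `(K_i, L_i)^{*K}`: the union over faces
`σ ∈ K` of the joins `Y_1 * ⋯ * Y_m` with `Y_i = K_i` for `i ∈ σ` and `Y_i = L_i`
otherwise. -/
def polyJoinFaces (K : SComplex (Fin m)) (Ks Ls : ∀ i, SComplex (Fin (l i))) :
    Set (Finset (Σ i : Fin m, Fin (l i))) :=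
  ⋃ σ ∈ K.faces, {τ | ∀ i : Fin m, slice τ i ∈ (if i ∈ σ then Ks i else Ls i).faces}

/-- The polyhedral join product `(K_i, L_i)^{*K}` as a simplicial complex on the disjoint
union `⊔ᵢ [lᵢ]`. -/
def polyJoin (K : SComplex (Fin m)) (Ks Ls : ∀ i, SComplex (Fin (l i))) :
    SComplex (Σ i : Fin m, Fin (l i)) where
  faces := polyJoinFaces K Ks Ls
  empty_mem := by
    refine Set.mem_biUnion K.empty_mem ?_
    intro i
    have h : slice (∅ : Finset (Σ i : Fin m, Fin (l i))) i = ∅ := Finset.preimage_empty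
    simp only [Set.mem_setOf_eq, h]
    split_ifs <;> exact SComplex.empty_mem _
  down_closed := by
    intro σ τ hσ hτσ
    obtain ⟨s, hs, hσ'⟩ := Set.mem_iUnion₂.mp hσ
    refine Set.mem_biUnion hs ?_
    intro i
    have hsub : slice τ i ⊆ slice σ i := by
      intro x hx
      simp only [slice, Finset.mem_preimage] at hx ⊢
      exact hτσ hx
    exact SComplex.down_closed _ (hσ' i) hsub

/-- The polyhedral product of pairs of subsets `(X_v, A_v)` of spaces `Y_v`, over a
simplicial complex `KK` on the vertex type `V`. -/
def polyProdS {V : Type*} {Y : V → Type*} (KK : SComplex V) (X A : ∀ v, Set (Y v)) :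
    Set (∀ v, Y v) :=
  ⋃ σ ∈ KK.faces, {f | (∀ v, v ∈ σ → f v ∈ X v) ∧ ∀ v, v ∉ σ → f v ∈ A v}

/-- The full simplex on `[n]`. -/
def fullCx (n : ℕ) : SComplex (Fin n) where
  faces := Set.univ
  empty_mem := trivial
  down_closed := fun _ _ => trivial

/-- The boundary of the simplex on `[n]` (`n ≥ 1`): all proper subsets of `[n]`. -/
def bdCx (n : ℕ) (hn : 0 < n) : SComplex (Fin n) where
  faces := {σ | σ ≠ Finset.univ}
  empty_mem := by
    have : (Finset.univ : Finset (Fin n)).Nonempty := ⟨⟨0, hn⟩, Finset.mem_univ _⟩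
    exact fun h => this.ne_empty h.symm
  down_closed := by
    intro σ τ hσ hτσ h
    exact hσ (Finset.univ_subset_iff.mp (h ▸ hτσ))

end MAC

namespace MAC

/-- **(Vidaurre).** For CW pairs `(X_{i,j}, A_{i,j})` grouped into tuples of lengths `l_i`,
the polyhedral product over the polyhedral join satisfies
`(𝐗,𝐀)^{(K_i,L_i)^{*K}} = ((𝐗_i,𝐀_i)^{K_i}, (𝐗_i,𝐀_i)^{L_i})^K` as subspaces of
`∏_{i,j} X_{i,j}` (identifying `∏_{(i,j)} X_{i,j}` with `∏_i ∏_j X_{i,j}`). -/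
theorem polyProd_polyJoin (m : ℕ) (l : Fin m → ℕ) (K : SComplex (Fin m))
    (Ks Ls : ∀ i, SComplex (Fin (l i))) (hL : ∀ i, (Ls i).faces ⊆ (Ks i).faces)
    (X : ∀ i : Fin m, Fin (l i) → Type*) [∀ i j, TopologicalSpace (X i j)]
    (A : ∀ i : Fin m, ∀ j : Fin (l i), Set (X i j)) :
    (Equiv.piCurry X) ''
        (polyProdS (polyJoin K Ks Ls) (fun _ => Set.univ) (fun v => A v.1 v.2)) =
      polyProdS K (fun i => polyProdS (Ks i) (fun _ => Set.univ) (A i))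
        (fun i => polyProdS (Ls i) (fun _ => Set.univ) (A i)) := by
  classical
  ext g
  rw [Equiv.image_eq_preimage_symm]
  simp only [Set.mem_preimage, polyProdS, polyJoin, polyJoinFaces, Set.mem_iUnion,
    Set.mem_setOf_eq]
  constructor
  · rintro ⟨τ, hτ, -, hA⟩
    obtain ⟨σ, hσ, hslice⟩ := hτ
    refine ⟨σ, hσ, ?_, ?_⟩
    · intro i hi
      have := hslice i
      rw [if_pos hi] at this
      refine ⟨slice τ i, this, fun j _ => Set.mem_univ _, fun j hj => ?_⟩
      have hjτ : (⟨i, j⟩ : Σ i, Fin (l i)) ∉ τ := by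
        intro hmem
        exact hj (Finset.mem_preimage.mpr hmem)
      exact hA ⟨i, j⟩ hjτ
    · intro i hi
      have := hslice i
      rw [if_neg hi] at this
      refine ⟨slice τ i, this, fun j _ => Set.mem_univ _, fun j hj => ?_⟩
      have hjτ : (⟨i, j⟩ : Σ i, Fin (l i)) ∉ τ := by
        intro hmem
        exact hj (Finset.mem_preimage.mpr hmem)
      exact hA ⟨i, j⟩ hjτ
  · rintro ⟨σ, hσ, h1, h2⟩
    have hex : ∀ i : Fin m, ∃ t : Finset (Fin (l i)),
        t ∈ (if i ∈ σ then Ks i else Ls i).faces ∧ ∀ j ∉ t, g i j ∈ A i j := by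
      intro i
      by_cases hi : i ∈ σ
      · obtain ⟨t, ht, -, hAt⟩ := h1 i hi
        exact ⟨t, by rw [if_pos hi]; exact ht, hAt⟩
      · obtain ⟨t, ht, -, hAt⟩ := h2 i hi
        exact ⟨t, by rw [if_neg hi]; exact ht, hAt⟩
    choose t ht hAt using hex
    refine ⟨Finset.univ.sigma t, ?_, fun v _ => Set.mem_univ _, ?_⟩
    · refine ⟨σ, hσ, fun i => ?_⟩
      have hsl : slice (Finset.univ.sigma t) i = t i := by
        ext j
        simp [slice, Finset.mem_preimage, Finset.mem_sigma]
      rw [hsl]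
      exact ht i
    · rintro ⟨i, j⟩ hv
      have : j ∉ t i := by
        intro hj
        exact hv (Finset.mem_sigma.mpr ⟨Finset.mem_univ _, hj⟩)
      exact hAt i j this

end MAC
end
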